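/- Let Π be a polar space of rank n ≥ 3 of type C, let 0 ≤ k ≤ n−2, let B = {p_1, …, p_{2n}} be a base of Π and 𝓑 the associated base subset of G_k. For every i ∈ {1, …, 2n}, the subset 𝓑(−i) is a maximal inexact subset of 𝓑. -/

import Mathlib

/- Common framework: polar spaces of rank `n`, singular subspaces, projective
dimension, Grassmannians, bases and base subsets, inexact/complement subsets,
following Pankov, "Base subsets of polar Grassmannians". -/

namespace PolarGeo

variable {P : Type*}

/-- The (reflexive) collinearity relation determined by a family of lines. -/
def Col (lines : Set (Set P)) (p q : P) : Prop :=
  p = q ∨ ∃ L ∈ lines, p ∈ L ∧ q ∈ L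

/-- `S` is a subspace: it contains every line through two of its distinct
collinear points. -/
def IsSubspace (lines : Set (Set P)) (S : Set P) : Prop :=
  ∀ p ∈ S, ∀ q ∈ S, p ≠ q → ∀ L ∈ lines, p ∈ L → q ∈ L → L ⊆ S

/-- A singular subspace: a subspace whose points are mutually collinear. -/
def IsSingular (lines : Set (Set P)) (S : Set P) : Prop :=
  IsSubspace lines S ∧ ∀ p ∈ S, ∀ q ∈ S, Col lines p q

/-- A flag: a chain of nonempty singular subspaces. -/
def IsFlag (lines : Set (Set P)) (C : Set (Set P)) : Prop :=
  IsChain (· ⊆ ·) C ∧ ∀ T ∈ C, IsSingular lines T ∧ T.Nonempty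

/-- A polar space of rank `n` on the point set `P`: a partial linear space
such that every point is collinear with one or all points of every line, no
point is collinear with all others, and every maximal flag of singular
subspaces consists of `n` elements. -/
structure PolarSpace (P : Type*) (n : ℕ) where
  lines : Set (Set P)
  line_proper : ∀ L ∈ lines, L ≠ (Set.univ : Set P)
  line_two : ∀ L ∈ lines, ∃ p ∈ L, ∃ q ∈ L, p ≠ q
  point_on_line : ∀ p : P, ∃ L ∈ lines, p ∈ L
  unique_line : ∀ p q : P, p ≠ q → ∀ L₁ ∈ lines, ∀ L₂ ∈ lines,
    p ∈ L₁ → q ∈ L₁ → p ∈ L₂ → q ∈ L₂ → L₁ = L₂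
  one_or_all : ∀ p : P, ∀ L ∈ lines,
    (∃! q, q ∈ L ∧ Col lines p q) ∨ ∀ q ∈ L, Col lines p q
  no_center : ∀ p : P, ∃ q : P, ¬ Col lines p q
  flag_card : ∀ C : Set (Set P), IsFlag lines C →
    (∀ C', IsFlag lines C' → C ⊆ C' → C = C') → C.ncard = n

/-- A flag all of whose members are contained in `S`. -/
def IsFlagIn (lines : Set (Set P)) (S : Set P) (C : Set (Set P)) : Prop :=
  IsFlag lines C ∧ ∀ T ∈ C, T ⊆ S

/-- `S` is a singular subspace of projective dimension `m` (so `dim ∅ = -1`):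
a maximal chain of nonempty singular subspaces contained in `S` has `m + 1`
members. -/
def HasDim (lines : Set (Set P)) (S : Set P) (m : ℤ) : Prop :=
  IsSingular lines S ∧ ∃ C : Set (Set P), IsFlagIn lines S C ∧
    (∀ C', IsFlagIn lines S C' → C ⊆ C' → C = C') ∧
    C.Finite ∧ (C.ncard : ℤ) = m + 1

/-- The Grassmannian `G_m` of `m`-dimensional singular subspaces. -/
def Gdim (lines : Set (Set P)) (m : ℤ) : Set (Set P) := {S | HasDim lines S m}

/-- The span of `X`: the smallest subspace containing `X`. -/
def span (lines : Set (Set P)) (X : Set P) : Set P :=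
  ⋂₀ {S : Set P | IsSubspace lines S ∧ X ⊆ S}

/-- `X ⊥`: the set of points collinear with every point of `X`. -/
def perp (lines : Set (Set P)) (X : Set P) : Set P :=
  {y | ∀ x ∈ X, Col lines x y}

/-- A base of the polar space: `2n` points each of which is non-collinear
with exactly one of them. -/
def IsBase (lines : Set (Set P)) {n : ℕ} (p : Fin (2 * n) → P) : Prop :=
  Function.Injective p ∧ ∀ i, ∃! j, ¬ Col lines (p i) (p j)

/-- The base subset of `G_k` associated with a base: all `k`-dimensional
singular subspaces spanned by points of the base. -/
def baseSubset (lines : Set (Set P)) {n : ℕ} (p : Fin (2 * n) → P) (k : ℤ) :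
    Set (Set P) :=
  {S | HasDim lines S k ∧ ∃ I : Set (Fin (2 * n)), S = span lines (p '' I)}

/-- `𝓑(+x)`: the elements of `𝓑` containing the point `x`. -/
def plus (𝓑 : Set (Set P)) (x : P) : Set (Set P) := {S ∈ 𝓑 | x ∈ S}

/-- `𝓑(-x)`: the elements of `𝓑` not containing the point `x`. -/
def minus (𝓑 : Set (Set P)) (x : P) : Set (Set P) := {S ∈ 𝓑 | x ∉ S}

/-- `R ⊆ 𝓑` is inexact: some base subset of `G_k` different from `𝓑`
contains `R`. -/
def IsInexact (lines : Set (Set P)) (n : ℕ) (k : ℤ) (𝓑 R : Set (Set P)) : Prop :=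
  R ⊆ 𝓑 ∧ ∃ p' : Fin (2 * n) → P, IsBase lines p' ∧
    R ⊆ baseSubset lines p' k ∧ baseSubset lines p' k ≠ 𝓑

/-- `R ⊆ 𝓑` is exact: `𝓑` is the only base subset of `G_k` containing `R`. -/
def IsExact (lines : Set (Set P)) (n : ℕ) (k : ℤ) (𝓑 R : Set (Set P)) : Prop :=
  R ⊆ 𝓑 ∧ ∀ p' : Fin (2 * n) → P, IsBase lines p' →
    R ⊆ baseSubset lines p' k → baseSubset lines p' k = 𝓑

/-- A maximal inexact subset of `𝓑`. -/
def IsMaxInexact (lines : Set (Set P)) (n : ℕ) (k : ℤ) (𝓑 R : Set (Set P)) : Prop :=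
  IsInexact lines n k 𝓑 R ∧ ∀ R', IsInexact lines n k 𝓑 R' → R ⊆ R' → R = R'

/-- A complement subset of `𝓑`: the complement of a maximal inexact subset. -/
def IsComplement (lines : Set (Set P)) (n : ℕ) (k : ℤ) (𝓑 R : Set (Set P)) : Prop :=
  R ⊆ 𝓑 ∧ IsMaxInexact lines n k 𝓑 (𝓑 \ R)

/-- Type `C`: every `(n-2)`-dimensional singular subspace is contained in at
least `3` maximal singular subspaces. -/
def TypeC (lines : Set (Set P)) (n : ℕ) : Prop :=
  ∀ S ∈ Gdim lines ((n : ℤ) - 2), ∃ M₁ ∈ Gdim lines ((n : ℤ) - 1),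
    ∃ M₂ ∈ Gdim lines ((n : ℤ) - 1), ∃ M₃ ∈ Gdim lines ((n : ℤ) - 1),
      M₁ ≠ M₂ ∧ M₁ ≠ M₃ ∧ M₂ ≠ M₃ ∧ S ⊆ M₁ ∧ S ⊆ M₂ ∧ S ⊆ M₃

/-- Type `D`: every `(n-2)`-dimensional singular subspace is contained in
exactly `2` maximal singular subspaces. -/
def TypeD (lines : Set (Set P)) (n : ℕ) : Prop :=
  ∀ S ∈ Gdim lines ((n : ℤ) - 2),
    {M | M ∈ Gdim lines ((n : ℤ) - 1) ∧ S ⊆ M}.ncard = 2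

/-- A collineation of a point-line geometry on the whole type: a bijection
preserving the family of lines in both directions. -/
def IsCollineation (lines : Set (Set P)) (f : P → P) : Prop :=
  Function.Bijective f ∧ ∀ L : Set P, L ∈ lines ↔ f '' L ∈ lines

/-- A collineation of a partial linear space whose point set is the subset
`pts` of `X`: a bijection of `pts` mapping the family of lines onto itself in
both directions. -/
def IsCollineationOn {X : Type*} (pts : Set X) (lns : Set (Set X)) (f : X → X) : Prop :=
  Set.BijOn f pts pts ∧ (∀ ℓ ∈ lns, f '' ℓ ∈ lns) ∧
    (∀ ℓ ∈ lns, ∃ ℓ' ∈ lns, f '' ℓ' = ℓ)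

/-- Lines of the Grassmann space `𝔊_k`. For `k ≤ n - 2` a line is given by
incident `S ∈ G_{k-1}`, `U ∈ G_{k+1}` (for `k = 0` this is the shadow of an
element of `G_1`); for `k = n - 1` a line is given by an element of
`G_{n-2}`. -/
def grassLines (lines : Set (Set P)) (n k : ℕ) : Set (Set (Set P)) :=
  if k = n - 1 then
    {ℓ | ∃ S ∈ Gdim lines ((n : ℤ) - 2),
      ℓ = {T | T ∈ Gdim lines ((n : ℤ) - 1) ∧ S ⊆ T}}
  else
    {ℓ | ∃ S ∈ Gdim lines ((k : ℤ) - 1), ∃ U ∈ Gdim lines ((k : ℤ) + 1),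
      S ⊆ U ∧ ℓ = {T | T ∈ Gdim lines (k : ℤ) ∧ S ⊆ T ∧ T ⊆ U}}

/-- Collinearity of distinct points of `𝔊_k` for `k ≤ n - 2`: `S ⊥ U` and
the span of `S ∪ U` is `(k+1)`-dimensional. -/
def GColl (lines : Set (Set P)) (k : ℤ) (S U : Set P) : Prop :=
  S ≠ U ∧ (∀ a ∈ S, ∀ b ∈ U, Col lines a b) ∧
    span lines (S ∪ U) ∈ Gdim lines (k + 1)

/-- Weak adjacency in `G_k`: the intersection is `(k-1)`-dimensional. -/
def WeakAdj (lines : Set (Set P)) (k : ℤ) (S U : Set P) : Prop :=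
  S ∩ U ∈ Gdim lines (k - 1)

/-- The complement subset `C_{ij} = 𝓑(+i,-j) ∪ 𝓑(+σ(j),-σ(i))` of second
type. -/
def Cij (lines : Set (Set P)) {n : ℕ} (p : Fin (2 * n) → P)
    (σ : Fin (2 * n) → Fin (2 * n)) (k : ℤ) (i j : Fin (2 * n)) : Set (Set P) :=
  (plus (baseSubset lines p k) (p i) ∩ minus (baseSubset lines p k) (p j)) ∪
  (plus (baseSubset lines p k) (p (σ j)) ∩ minus (baseSubset lines p k) (p (σ i)))

/-- The inexact subset
`R_{ij} = 𝓑(+i,+j) ∪ 𝓑(+σ(i),+σ(j)) ∪ 𝓑(-i,-σ(j))` of second type. -/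
def Rij (lines : Set (Set P)) {n : ℕ} (p : Fin (2 * n) → P)
    (σ : Fin (2 * n) → Fin (2 * n)) (k : ℤ) (i j : Fin (2 * n)) : Set (Set P) :=
  (plus (baseSubset lines p k) (p i) ∩ plus (baseSubset lines p k) (p j)) ∪
  (plus (baseSubset lines p k) (p (σ i)) ∩ plus (baseSubset lines p k) (p (σ j))) ∪
  (minus (baseSubset lines p k) (p i) ∩ minus (baseSubset lines p k) (p (σ j)))

/-- `c(S,U)`: the number of complement subsets of second type of the base
subset containing both `S` and `U`. -/
noncomputable def cCount (lines : Set (Set P)) {n : ℕ} (p : Fin (2 * n) → P)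
    (σ : Fin (2 * n) → Fin (2 * n)) (k : ℤ) (S U : Set P) : ℕ :=
  {R : Set (Set P) | (∃ i j, j ≠ i ∧ j ≠ σ i ∧ R = Cij lines p σ k i j) ∧
    S ∈ R ∧ U ∈ R}.ncard

/-- `O_+`, `O_-` form the half-spin partition of `G_{n-1}`: two maximal
singular subspaces lie in the same class iff `n - dim (S ∩ U)` is odd. -/
def IsHalfSpinPair (lines : Set (Set P)) (n : ℕ) (Opos Oneg : Set (Set P)) : Prop :=
  Opos.Nonempty ∧ Oneg.Nonempty ∧ Disjoint Opos Oneg ∧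
  Opos ∪ Oneg = Gdim lines ((n : ℤ) - 1) ∧
  ∀ S ∈ Gdim lines ((n : ℤ) - 1), ∀ U ∈ Gdim lines ((n : ℤ) - 1),
    ((S ∈ Opos ↔ U ∈ Opos) ↔ ∃ m : ℤ, HasDim lines (S ∩ U) m ∧ Odd ((n : ℤ) - m))

/-- The base subset of `O_δ` associated with a base. -/
def baseSubsetO (lines : Set (Set P)) (n : ℕ) (Oδ : Set (Set P))
    (p : Fin (2 * n) → P) : Set (Set P) :=
  Oδ ∩ baseSubset lines p ((n : ℤ) - 1)

/-- `R ⊆ 𝓑` is inexact in `O_δ`: some base subset of `O_δ` different from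
`𝓑` contains `R`. -/
def IsInexactO (lines : Set (Set P)) (n : ℕ) (Oδ : Set (Set P))
    (𝓑 R : Set (Set P)) : Prop :=
  R ⊆ 𝓑 ∧ ∃ p' : Fin (2 * n) → P, IsBase lines p' ∧
    R ⊆ baseSubsetO lines n Oδ p' ∧ baseSubsetO lines n Oδ p' ≠ 𝓑

/-- A maximal inexact subset of a base subset `𝓑` of `O_δ`. -/
def IsMaxInexactO (lines : Set (Set P)) (n : ℕ) (Oδ : Set (Set P))
    (𝓑 R : Set (Set P)) : Prop :=
  IsInexactO lines n Oδ 𝓑 R ∧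
    ∀ R', IsInexactO lines n Oδ 𝓑 R' → R ⊆ R' → R = R'

/-- A complement subset of a base subset `𝓑` of `O_δ`. -/
def IsComplementO (lines : Set (Set P)) (n : ℕ) (Oδ : Set (Set P))
    (𝓑 R : Set (Set P)) : Prop :=
  R ⊆ 𝓑 ∧ IsMaxInexactO lines n Oδ 𝓑 (𝓑 \ R)

/-- Lines of the half-spin space `𝔒_δ`: sets of all elements of `O_δ`
containing a fixed `(n-3)`-dimensional singular subspace. -/
def halfSpinLines (lines : Set (Set P)) (n : ℕ) (Oδ : Set (Set P)) :
    Set (Set (Set P)) :=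
  {ℓ | ∃ S ∈ Gdim lines ((n : ℤ) - 3), ℓ = {T | T ∈ Oδ ∧ S ⊆ T}}

end PolarGeo

/-!
Let `σ` pair each point of the base `p` with the unique base point not collinear to it.

Inexactness: in type C, the `(n-2)`-space `N` spanned by `n - 1` base points other than `p i`,
`p (σ i)` lies in a third maximal singular subspace `M` besides the two spanned by base points, so
`M` contains neither `p i` nor `p (σ i)`. Starting from a point of `M \ N` and moving along lines
of `M` through the points of `N`, one reaches a point `x` that is also collinear with every
`p (σ d)`, `p d ∈ N`; so `x` is collinear with all base points except `p i` and `p (σ i)`.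
Replacing `p i` by `x` gives a base whose base subset contains `𝓑(-i)` but differs from `𝓑`.

Maximality: let a base subset `𝓑_q` contain `𝓑(-i)` and some `S ∋ p i`. Since `k ≤ n - 2`, each
`p l` with `l ≠ i` is the intersection of two elements of `𝓑(-i)`, hence a point of `q`. The one
remaining point `y` of `q` is opposite to `p (σ i)`, so collinear with every `p l`, `l ≠ i, σ i`;
it lies in `S` (otherwise `S` would be spanned by the `p l`, `l ≠ i`), so it is collinear with
`p i` as well. The only such point is `p i`, hence `q` and `p` have the same points.

All dimension counts reduce to one fact: spans of growing sets of pairwise collinear base points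
form strictly increasing chains, and no flag is longer than the rank.
-/

namespace PolarGeo

open Set

variable {P : Type*}

section Lines

variable {lines : Set (Set P)} {X Y S : Set P} {x y z : P}

theorem col_refl (x : P) : Col lines x x := Or.inl rfl

theorem Col.symm (h : Col lines x y) : Col lines y x := by
  rcases h with rfl | ⟨L, hL, hx, hy⟩
  exacts [col_refl x, Or.inr ⟨L, hL, hy, hx⟩]

theorem col_comm : Col lines x y ↔ Col lines y x := ⟨Col.symm, Col.symm⟩

theorem Col.exists_line (h : Col lines x y) (hxy : x ≠ y) : ∃ L ∈ lines, x ∈ L ∧ y ∈ L :=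
  h.resolve_left hxy

theorem mem_perp_singleton : y ∈ perp lines {z} ↔ Col lines z y := by
  simp [perp]

theorem isSubspace_span (X : Set P) : IsSubspace lines (span lines X) :=
  fun _ ha _ hb hab L hL haL hbL _ hx S hS => hS.1 _ (ha S hS) _ (hb S hS) hab L hL haL hbL hx

theorem subset_span : X ⊆ span lines X :=
  fun _ hx _ hS => hS.2 hx

theorem span_subset (hS : IsSubspace lines S) (hXS : X ⊆ S) : span lines X ⊆ S :=
  fun _ hx => hx S ⟨hS, hXS⟩

theorem span_mono (h : X ⊆ Y) : span lines X ⊆ span lines Y :=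
  span_subset (isSubspace_span Y) (h.trans subset_span)

theorem span_empty : span lines (∅ : Set P) = ∅ :=
  subset_empty_iff.1 <| span_subset (fun _ h => h.elim) subset_rfl

theorem span_singleton : span lines {x} = {x} :=
  subset_antisymm (span_subset (fun _ ha _ hb hab => (hab (ha.trans hb.symm)).elim) subset_rfl)
    subset_span

theorem IsSingular.isFlag {M : Set P} {F : Set (Set P)} (hM : IsSingular lines M)
    (hF : IsChain (· ⊆ ·) F) (hT : ∀ T ∈ F, IsSubspace lines T ∧ T.Nonempty ∧ T ⊆ M) :
    IsFlag lines F :=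
  ⟨hF, fun T h => ⟨⟨(hT T h).1, fun a ha b hb =>
    hM.2 a ((hT T h).2.2 ha) b ((hT T h).2.2 hb)⟩, (hT T h).2.1⟩⟩

theorem isFlag_sUnion {c : Set (Set (Set P))} (hc : ∀ F ∈ c, IsFlag lines F)
    (hchain : IsChain (· ⊆ ·) c) : IsFlag lines (⋃₀ c) := by
  refine ⟨?_, fun T ⟨F, hF, hT⟩ => (hc F hF).2 T hT⟩
  rintro T ⟨F, hF, hT⟩ U ⟨G, hG, hU⟩ hTU
  rcases hchain.total hF hG with h | h
  exacts [(hc G hG).1 (h hT) hU hTU, (hc F hF).1 hT (h hU) hTU]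

theorem exists_maximal_flagIn {C : Set (Set P)} (hC : IsFlagIn lines S C) :
    ∃ C', C ⊆ C' ∧ IsFlagIn lines S C' ∧
      ∀ C'', IsFlagIn lines S C'' → C' ⊆ C'' → C' = C'' := by
  obtain ⟨C', hCC', hmax⟩ := zorn_subset_nonempty {F | IsFlagIn lines S F ∧ C ⊆ F}
    (fun c hc hchain ⟨F, hF⟩ => ⟨⋃₀ c,
      ⟨⟨isFlag_sUnion (fun G hG => (hc hG).1.1) hchain,
        fun T ⟨G, hG, hT⟩ => (hc hG).1.2 T hT⟩, (hc hF).2.trans (subset_sUnion_of_mem hF)⟩,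
      fun _ => subset_sUnion_of_mem⟩) C ⟨hC, subset_rfl⟩
  exact ⟨C', hCC', hmax.prop.1, fun C'' hC'' h => h.antisymm (hmax.2 ⟨hC'', hCC'.trans h⟩ h)⟩

end Lines

section Opposition

variable {lines : Set (Set P)} {ι : Type*} {q : ι → P} {σ : ι → ι}

def IsOpposition (lines : Set (Set P)) (q : ι → P) (σ : ι → ι) : Prop :=
  ∀ a b, Col lines (q a) (q b) ↔ b ≠ σ a

namespace IsOpposition

variable (hσ : IsOpposition lines q σ)
include hσ

theorem apply_ne (a : ι) : σ a ≠ a :=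
  fun h => (hσ a a).1 (col_refl _) h.symm

theorem not_col (a : ι) : ¬ Col lines (q a) (q (σ a)) :=
  fun h => (hσ a (σ a)).1 h rfl

theorem involutive : Function.Involutive σ :=
  fun a => by_contra fun h => hσ.not_col a ((hσ (σ a) a).2 (Ne.symm h)).symm

theorem injective : Function.Injective q := by
  intro a b h
  refine hσ.involutive.injective (by_contra fun hne => hσ.not_col b ?_)
  exact h ▸ (hσ a (σ b)).2 (Ne.symm hne)

end IsOpposition

theorem IsOpposition.isBase {n : ℕ} {q : Fin (2 * n) → P} {σ : Fin (2 * n) → Fin (2 * n)}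
    (hσ : IsOpposition lines q σ) : IsBase lines q :=
  ⟨hσ.injective, fun a => ⟨σ a, hσ.not_col a, fun _ hb => by_contra fun h => hb ((hσ a _).2 h)⟩⟩

theorem IsBase.exists_isOpposition {n : ℕ} {p : Fin (2 * n) → P} (hp : IsBase lines p) :
    ∃ σ, IsOpposition lines p σ := by
  choose σ hσ huniq using hp.2
  exact ⟨σ, fun a b => ⟨fun h hb => hσ a (hb ▸ h), fun hb => by_contra fun h => hb (huniq a b h)⟩⟩

theorem IsOpposition.update [DecidableEq ι] (hσ : IsOpposition lines q σ) {i : ι} {x : P}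
    (hx : ∀ l, Col lines (q l) x ↔ l ≠ i ∧ l ≠ σ i) :
    IsOpposition lines (Function.update q i x) σ := by
  intro a b
  by_cases ha : a = i <;> by_cases hb : b = i
  · rw [ha, hb, Function.update_self]
    exact iff_of_true (col_refl x) (hσ.apply_ne i).symm
  · rw [ha, Function.update_self, Function.update_of_ne hb, col_comm, hx]
    exact and_iff_right hb
  · rw [hb, Function.update_self, Function.update_of_ne ha, hx, and_iff_right ha]
    exact not_congr (by rw [eq_comm, hσ.involutive.eq_iff])
  · rw [Function.update_of_ne ha, Function.update_of_ne hb]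
    exact hσ a b

end Opposition

section PairFree

variable {lines : Set (Set P)} {ι : Type*} {q : ι → P} {σ : ι → ι} {K L : Finset ι}

def PairFree (σ : ι → ι) (K : Finset ι) : Prop := ∀ a ∈ K, σ a ∉ K

theorem PairFree.mono (hL : PairFree σ L) (hKL : K ⊆ L) : PairFree σ K :=
  fun a ha hσa => hL a (hKL ha) (hKL hσa)

theorem pairFree_singleton {a : ι} (h : σ a ≠ a) : PairFree σ {a} := by
  simpa [PairFree] using h

theorem pairFree_insert [DecidableEq ι] (hinv : Function.Involutive σ) {a : ι} (hK : PairFree σ K)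
    (ha : σ a ≠ a) (haK : σ a ∉ K) : PairFree σ (insert a K) := by
  intro b hb
  rcases Finset.mem_insert.1 hb with rfl | hb
  · simpa [ha] using haK
  · rw [Finset.mem_insert, not_or]
    exact ⟨fun h => haK (h ▸ (hinv b).symm ▸ hb), hK b hb⟩

theorem PairFree.disjoint_image [DecidableEq ι] (hK : PairFree σ K) : Disjoint K (K.image σ) :=
  Finset.disjoint_right.2 fun _ ha haK =>
    let ⟨b, hb, hba⟩ := Finset.mem_image.1 ha
    hK b hb (hba ▸ haK)

theorem PairFree.image [DecidableEq ι] (hinv : Function.Involutive σ) (hK : PairFree σ K) :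
    PairFree σ (K.image σ) := by
  rintro _ ha hσa
  obtain ⟨b, hb, rfl⟩ := Finset.mem_image.1 ha
  rw [hinv b] at hσa
  exact Finset.disjoint_left.1 hK.disjoint_image hb hσa

theorem PairFree.col (hσ : IsOpposition lines q σ) (hK : PairFree σ K) {a b : ι} (ha : a ∈ K)
    (hb : b ∈ K) : Col lines (q a) (q b) :=
  (hσ a b).2 fun h => hK a ha (h ▸ hb)

theorem PairFree.card_union_image [DecidableEq ι] (hK : PairFree σ K) (hσ : σ.Injective) :
    (K ∪ K.image σ).card = 2 * K.card := by
  rw [Finset.card_union_of_disjoint hK.disjoint_image, Finset.card_image_of_injective K hσ,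
    two_mul]

section Fin

variable {n : ℕ} {σ : Fin (2 * n) → Fin (2 * n)} {K L : Finset (Fin (2 * n))}

theorem PairFree.mem_or_apply_mem (hinv : Function.Involutive σ) (hL : PairFree σ L)
    (hcard : L.card = n) (l : Fin (2 * n)) : l ∈ L ∨ σ l ∈ L := by
  classical
  have : L ∪ L.image σ = Finset.univ :=
    Finset.eq_univ_of_card _ (by rw [hL.card_union_image hinv.injective]; simp [hcard])
  rcases Finset.mem_union.1 (this ▸ Finset.mem_univ l) with h | h
  · exact Or.inl h
  · obtain ⟨a, ha, rfl⟩ := Finset.mem_image.1 h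
    exact Or.inr ((hinv a).symm ▸ ha)

theorem exists_pairFree_superset (hinv : Function.Involutive σ) (hfix : ∀ a, σ a ≠ a)
    (hK : PairFree σ K) : ∃ L, K ⊆ L ∧ PairFree σ L ∧ L.card = n := by
  classical
  induction hd : n - K.card generalizing K with
  | zero =>
    refine ⟨K, subset_rfl, hK, le_antisymm ?_ (by omega)⟩
    have := (K ∪ K.image σ).card_le_univ
    rw [hK.card_union_image hinv.injective, Fintype.card_fin] at this
    omega
  | succ d ih =>
    obtain ⟨c, -, hc⟩ := Finset.exists_mem_notMem_of_card_lt_card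
      (t := Finset.univ) (by rw [hK.card_union_image hinv.injective]; simp; omega)
    rw [Finset.mem_union, not_or] at hc
    have hins := pairFree_insert hinv hK (hfix c) fun h =>
      hc.2 (Finset.mem_image.2 ⟨σ c, h, hinv c⟩)
    obtain ⟨L, hL, hLK⟩ := ih hins (by rw [Finset.card_insert_of_notMem hc.1]; omega)
    exact ⟨L, (Finset.subset_insert c K).trans hL, hLK⟩

theorem exists_pairFree_superset_card_eq (hinv : Function.Involutive σ) (hfix : ∀ a, σ a ≠ a)
    (hK : PairFree σ K) {s : ℕ} (hKs : K.card ≤ s) (hsn : s ≤ n) :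
    ∃ L, K ⊆ L ∧ PairFree σ L ∧ L.card = s := by
  obtain ⟨M, hKM, hM, hMcard⟩ := exists_pairFree_superset hinv hfix hK
  obtain ⟨L, hKL, hLM, hLcard⟩ := Finset.exists_subsuperset_card_eq hKM hKs (hMcard.symm ▸ hsn)
  exact ⟨L, hKL, hM.mono hLM, hLcard⟩

theorem exists_pairFree_inter_eq_singleton (hinv : Function.Involutive σ) (hfix : ∀ a, σ a ≠ a)
    {k : ℕ} (hk : k + 2 ≤ n) {i l : Fin (2 * n)} (hli : l ≠ i) :
    ∃ I J : Finset (Fin (2 * n)), PairFree σ I ∧ PairFree σ J ∧ I.card = k + 1 ∧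
      J.card = k + 1 ∧ i ∉ I ∧ i ∉ J ∧ I ∩ J = {l} := by
  classical
  have hmem_image : ∀ {a : Fin (2 * n)} {X : Finset (Fin (2 * n))}, a ∈ X.image σ ↔ σ a ∈ X :=
    fun {a X} => ⟨fun h => let ⟨b, hb, e⟩ := Finset.mem_image.1 h; e ▸ (hinv b).symm ▸ hb,
      fun h => Finset.mem_image.2 ⟨σ a, h, hinv a⟩⟩
  have hlσi : PairFree σ {l, σ i} := by
    refine pairFree_insert hinv (pairFree_singleton (hfix _)) (hfix l) ?_
    simpa using fun h => hli (hinv.injective h)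
  obtain ⟨K, hsub, hK, hKcard⟩ := exists_pairFree_superset hinv hfix hlσi
  have hlK : l ∈ K := hsub (by simp)
  have hσiK : σ i ∈ K := hsub (by simp)
  have hiK : i ∉ K := hinv i ▸ hK _ hσiK
  obtain ⟨X, hXK, hXcard⟩ := Finset.exists_subset_card_eq (s := K \ {l, σ i}) (n := k) <| by
    have := Finset.card_le_card_sdiff_add_card (s := K) (t := {l, σ i})
    have := Finset.card_le_two (a := l) (b := σ i)
    omega
  have hX : PairFree σ X := hK.mono fun a ha => (Finset.mem_sdiff.1 (hXK ha)).1
  have hlX : l ∉ X := fun h => (Finset.mem_sdiff.1 (hXK h)).2 (by simp)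
  have hσiX : σ i ∉ X := fun h => (Finset.mem_sdiff.1 (hXK h)).2 (by simp)
  have hσlX : σ l ∉ X := fun h => hK l hlK (Finset.mem_sdiff.1 (hXK h)).1
  have hiX : i ∉ X := fun h => hiK (Finset.mem_sdiff.1 (hXK h)).1
  refine ⟨insert l X, insert l (X.image σ), pairFree_insert hinv hX (hfix l) hσlX,
    pairFree_insert hinv (hX.image hinv) (hfix l) (by rwa [hmem_image, hinv]), ?_, ?_, ?_, ?_, ?_⟩
  · rw [Finset.card_insert_of_notMem hlX, hXcard]
  · rw [Finset.card_insert_of_notMem (by rwa [hmem_image]),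
      Finset.card_image_of_injective X hinv.injective, hXcard]
  · simp [hiX, Ne.symm hli]
  · simp [hmem_image, hσiX, Ne.symm hli]
  · rw [← Finset.insert_inter_distrib, Finset.disjoint_iff_inter_eq_empty.1 hX.disjoint_image]
    rfl

end Fin

end PairFree

section BaseSubset

variable {lines : Set (Set P)} {n : ℕ}

theorem exists_pairFree_of_mem_baseSubset {q : Fin (2 * n) → P} {σ : Fin (2 * n) → Fin (2 * n)}
    (hσ : IsOpposition lines q σ) {k : ℤ} {S : Set P} (hS : S ∈ baseSubset lines q k) :
    ∃ J : Finset (Fin (2 * n)), PairFree σ J ∧ S = span lines (q '' J) := by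
  classical
  obtain ⟨hdim, I, rfl⟩ := hS
  refine ⟨I.toFinset, fun a ha hσa => hσ.not_col a ?_, by simp⟩
  exact hdim.1.2 _ (subset_span ⟨a, by simpa using ha, rfl⟩) _
    (subset_span ⟨σ a, by simpa using hσa, rfl⟩)

theorem baseSubset_subset_of_range_subset {p q : Fin (2 * n) → P} (h : range q ⊆ range p)
    (k : ℤ) : baseSubset lines q k ⊆ baseSubset lines p k := by
  rintro S ⟨hdim, J, rfl⟩
  refine ⟨hdim, p ⁻¹' (q '' J), ?_⟩
  rw [image_preimage_eq_of_subset ((image_subset_range _ _).trans h)]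

theorem baseSubset_eq_of_range_eq {p q : Fin (2 * n) → P} (h : range q = range p) (k : ℤ) :
    baseSubset lines q k = baseSubset lines p k :=
  (baseSubset_subset_of_range_subset h.le k).antisymm (baseSubset_subset_of_range_subset h.ge k)

theorem minus_subset_baseSubset_update {q : Fin (2 * n) → P} {k : ℤ} (i : Fin (2 * n)) (x : P) :
    minus (baseSubset lines q k) (q i) ⊆ baseSubset lines (Function.update q i x) k := by
  rintro S ⟨⟨hdim, I, rfl⟩, hiS⟩
  refine ⟨hdim, I, congrArg _ (image_congr fun l hl => (Function.update_of_ne ?_ x q).symm)⟩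
  rintro rfl
  exact hiS (subset_span ⟨l, hl, rfl⟩)

theorem range_eq_insert_of_image_compl_subset {ι : Type*} [Finite ι] {p q : ι → P}
    (hp : p.Injective) (hq : q.Injective) {i : ι} (hsub : p '' {i}ᶜ ⊆ range q) {y : P}
    (hy : y ∈ range q) (hyp : y ∉ p '' {i}ᶜ) : range q = insert y (p '' {i}ᶜ) := by
  refine (eq_of_subset_of_ncard_le (insert_subset hy hsub) ?_ (toFinite _)).symm
  rw [ncard_insert_of_notMem hyp, ncard_image_of_injective _ hp, ncard_compl,
    ncard_range_of_injective hq, ncard_singleton]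
  have : 0 < Nat.card ι := Nat.card_pos_iff.2 ⟨⟨i⟩, ‹_›⟩
  omega

end BaseSubset

namespace PolarSpace

variable {n : ℕ} (Pol : PolarSpace P n)

theorem isSubspace_perp (X : Set P) : IsSubspace Pol.lines (perp Pol.lines X) := by
  intro a ha b hb hab L hL haL hbL y hy x hx
  rcases Pol.one_or_all x L hL with ⟨_, _, huniq⟩ | hall
  · exact absurd ((huniq a ⟨haL, ha x hx⟩).trans (huniq b ⟨hbL, hb x hx⟩).symm) hab
  · exact hall y hy

theorem exists_isSingular_superset {K : Set P} (hK : ∀ a ∈ K, ∀ b ∈ K, Col Pol.lines a b) :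
    ∃ M, K ⊆ M ∧ IsSingular Pol.lines M := by
  set cliques := {C : Set P | (∀ a ∈ C, ∀ b ∈ C, Col Pol.lines a b) ∧ K ⊆ C}
  obtain ⟨M, hKM, hM⟩ := zorn_subset_nonempty cliques (fun c hc hchain ⟨C, hC⟩ =>
    ⟨⋃₀ c, ⟨fun a ⟨A, hA, ha⟩ b ⟨B, hB, hb⟩ => (hchain.total hA hB).elim
        (fun h => (hc hB).1 a (h ha) b hb) (fun h => (hc hA).1 a ha b (h hb)),
      (hc hC).2.trans (subset_sUnion_of_mem hC)⟩, fun _ => subset_sUnion_of_mem⟩) K ⟨hK, subset_rfl⟩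
  -- A maximal clique is a subspace: a point on a line through two of its points is collinear
  -- with all of it, by the one-or-all axiom.
  refine ⟨M, hKM, fun a ha b hb hab L hL haL hbL w hw => ?_, hM.prop.1⟩
  have hw : ∀ z ∈ M, Col Pol.lines z w := by
    intro z hz
    rcases Pol.one_or_all z L hL with ⟨_, _, huniq⟩ | hall
    · exact absurd ((huniq a ⟨haL, hM.prop.1 z hz a ha⟩).trans
        (huniq b ⟨hbL, hM.prop.1 z hz b hb⟩).symm) hab
    · exact hall w hw
  have hclique : insert w M ∈ cliques := by
    refine ⟨?_, hKM.trans (subset_insert w M)⟩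
    rintro x (rfl | hx) y (rfl | hy)
    exacts [col_refl _, (hw y hy).symm, hw x hx, hM.prop.1 x hx y hy]
  exact hM.2 hclique (subset_insert w M) (mem_insert w M)

theorem exists_maximal_flag {F₀ : Set (Set P)} (h : IsFlag Pol.lines F₀) :
    ∃ F, F₀ ⊆ F ∧ IsFlag Pol.lines F ∧ ∀ F', IsFlag Pol.lines F' → F ⊆ F' → F = F' := by
  obtain ⟨F, hF₀F, hF⟩ := zorn_subset_nonempty {F | IsFlag Pol.lines F}
    (fun c hc hchain _ => ⟨⋃₀ c, isFlag_sUnion (fun F hF => hc hF) hchain,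
      fun _ => subset_sUnion_of_mem⟩) F₀ h
  exact ⟨F, hF₀F, hF.prop, fun F' hF' h => h.antisymm (hF.2 hF' h)⟩

theorem finite_ncard_le_of_isFlag (hn : n ≠ 0) {F : Set (Set P)} (hF : IsFlag Pol.lines F) :
    F.Finite ∧ F.ncard ≤ n := by
  obtain ⟨G, hFG, hG, hmax⟩ := Pol.exists_maximal_flag hF
  have hcard : G.ncard = n := Pol.flag_card G hG hmax
  have hfin : G.Finite := Set.finite_of_ncard_ne_zero (hcard ▸ hn)
  exact ⟨hfin.subset hFG, hcard ▸ ncard_le_ncard hFG hfin⟩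

theorem eq_of_hasDim_of_subset (hn : n ≠ 0) {M W : Set P} (hM : HasDim Pol.lines M (n - 1))
    (hW : IsSingular Pol.lines W) (hMW : M ⊆ W) : M = W := by
  obtain ⟨-, C, hCM, -, hCfin, hCcard⟩ := hM
  by_contra hne
  have hWC : W ∉ C := fun h => hne (hMW.antisymm (hCM.2 W h))
  have hCne : C.Nonempty := nonempty_of_ncard_ne_zero (by omega)
  have hflag : IsFlag Pol.lines (insert W C) := by
    refine ⟨hCM.1.1.insert fun T hT _ => Or.inr ((hCM.2 T hT).trans hMW), ?_⟩
    rintro T (rfl | hT)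
    · obtain ⟨T, hT⟩ := hCne
      exact ⟨hW, (hCM.1.2 T hT).2.mono ((hCM.2 T hT).trans hMW)⟩
    · exact hCM.1.2 T hT
  have := (Pol.finite_ncard_le_of_isFlag hn hflag).2
  rw [ncard_insert_of_notMem hWC hCfin] at this
  omega

theorem ncard_add_ncard_le_of_isChain (hn : n ≠ 0) {M Z : Set P} (hM : IsSingular Pol.lines M)
    (hZM : Z ⊆ M) {F G : Set (Set P)} (hF : IsChain (· ⊆ ·) F) (hG : IsChain (· ⊆ ·) G)
    (hGfin : G.Finite) (hFZ : ∀ T ∈ F, IsSubspace Pol.lines T ∧ T.Nonempty ∧ T ⊆ Z)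
    (hZG : ∀ T ∈ G, IsSubspace Pol.lines T ∧ Z ⊂ T ∧ T ⊆ M) :
    F.Finite ∧ F.ncard + G.ncard ≤ n := by
  have hflag : IsFlag Pol.lines (F ∪ G) := by
    refine hM.isFlag (isChain_union.2 ⟨hF, hG, fun T hT U hU _ =>
      Or.inl ((hFZ T hT).2.2.trans (hZG U hU).2.1.subset)⟩) ?_
    rintro T (hT | hT)
    · exact ⟨(hFZ T hT).1, (hFZ T hT).2.1, (hFZ T hT).2.2.trans hZM⟩
    · exact ⟨(hZG T hT).1, nonempty_of_ssubset' (hZG T hT).2.1, (hZG T hT).2.2⟩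
  obtain ⟨hfin, hle⟩ := Pol.finite_ncard_le_of_isFlag hn hflag
  have hFfin := hfin.subset subset_union_left
  have hdisj : Disjoint F G :=
    disjoint_left.2 fun T hTF hTG => (hZG T hTG).2.1.not_subset (hFZ T hTF).2.2
  exact ⟨hFfin, ncard_union_eq hdisj hFfin hGfin ▸ hle⟩

section Opposition

variable {ι : Type*} {q : ι → P} {σ : ι → ι}
  (hσ : IsOpposition Pol.lines q σ)
include hσ

variable {X : Set P} {I : Set ι} {c : ι}

theorem span_union_image_subset_perp (hX : X ⊆ perp Pol.lines {q c}) (hI : σ c ∉ I) :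
    span Pol.lines (X ∪ q '' I) ⊆ perp Pol.lines {q c} := by
  refine span_subset (Pol.isSubspace_perp _) (union_subset hX ?_)
  rintro _ ⟨b, hb, rfl⟩
  exact mem_perp_singleton.2 ((hσ c b).2 fun h => hI (h ▸ hb))

theorem span_image_subset_perp (hI : σ c ∉ I) : span Pol.lines (q '' I) ⊆ perp Pol.lines {q c} := by
  simpa using Pol.span_union_image_subset_perp hσ (empty_subset _) hI

theorem apply_notMem_span_union (hX : X ⊆ perp Pol.lines {q (σ c)}) (hc : c ∉ I) :
    q c ∉ span Pol.lines (X ∪ q '' I) := fun h =>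
  hσ.not_col c <| (mem_perp_singleton.1 <|
    Pol.span_union_image_subset_perp hσ hX (by rwa [hσ.involutive c]) h).symm

theorem apply_notMem_span_image (hc : c ∉ I) : q c ∉ span Pol.lines (q '' I) := by
  simpa using Pol.apply_notMem_span_union hσ (empty_subset _) hc

theorem exists_chain_spans [DecidableEq ι] (X : Set P) (D : Finset ι)
    (hX : ∀ c ∈ D, X ⊆ perp Pol.lines {q (σ c)}) :
    ∃ F : Set (Set P), F.Finite ∧ F.ncard = D.card ∧ IsChain (· ⊆ ·) F ∧
      ∀ T ∈ F, IsSubspace Pol.lines T ∧ span Pol.lines X ⊂ T ∧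
        T ⊆ span Pol.lines (X ∪ q '' D) := by
  induction D using Finset.induction_on with
  | empty => exact ⟨∅, finite_empty, by simp, IsChain.empty, by simp⟩
  | @insert c D hc ih =>
    obtain ⟨F, hFfin, hFcard, hFchain, hF⟩ := ih fun d hd => hX d (Finset.mem_insert_of_mem hd)
    set T := span Pol.lines (X ∪ q '' ↑(insert c D))
    have hcT : q c ∈ T := subset_span (Or.inr ⟨c, by simp, rfl⟩)
    have hcD : q c ∉ span Pol.lines (X ∪ q '' D) :=
      Pol.apply_notMem_span_union hσ (hX c (by simp)) (by exact_mod_cast hc)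
    have hDT : span Pol.lines (X ∪ q '' D) ⊆ T :=
      span_mono (union_subset_union_right _ (image_mono (by simp)))
    refine ⟨insert T F, hFfin.insert T, ?_, ?_, ?_⟩
    · rw [ncard_insert_of_notMem (fun h => hcD ((hF T h).2.2 hcT)) hFfin, hFcard,
        Finset.card_insert_of_notMem hc]
    · exact hFchain.insert fun U hU _ => Or.inr ((hF U hU).2.2.trans hDT)
    · rintro U (rfl | hU)
      · refine ⟨isSubspace_span _, (ssubset_iff_of_subset ?_).2 ⟨q c, hcT, ?_⟩, subset_rfl⟩
        · exact span_mono subset_union_left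
        · exact fun h => hcD (span_mono subset_union_left h)
      · exact ⟨(hF U hU).1, (hF U hU).2.1, (hF U hU).2.2.trans hDT⟩

theorem exists_mem_diff_forall_col [DecidableEq ι] {M N : Set P} (hM : IsSingular Pol.lines M)
    (hN : IsSubspace Pol.lines N) (hNM : N ⊆ M) {z₀ : P} (hz₀M : z₀ ∈ M) (hz₀N : z₀ ∉ N)
    (E : Finset ι) (hE : ∀ d ∈ E, q d ∈ N) :
    ∃ z ∈ M, z ∉ N ∧ ∀ d ∈ E, Col Pol.lines (q (σ d)) z := by
  induction E using Finset.induction_on with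
  | empty => exact ⟨z₀, hz₀M, hz₀N, by simp⟩
  | @insert d E hd ih =>
    obtain ⟨z, hzM, hzN, hz⟩ := ih fun e he => hE e (Finset.mem_insert_of_mem he)
    have hdN := hE d (Finset.mem_insert_self d E)
    simp only [Finset.forall_mem_insert]
    by_cases hcol : Col Pol.lines (q (σ d)) z
    · exact ⟨z, hzM, hzN, hcol, hz⟩
    -- Replace `z` by the point of the line `z (q d)` collinear with `q (σ d)`.
    have hzd : z ≠ q d := fun h => hzN (h ▸ hdN)
    obtain ⟨L, hL, hzL, hdL⟩ := (hM.2 z hzM (q d) (hNM hdN)).exists_line hzd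
    rcases Pol.one_or_all (q (σ d)) L hL with ⟨w, ⟨hwL, hw⟩, -⟩ | hall
    · have hwd : w ≠ q d := fun h => hσ.not_col d (h ▸ hw).symm
      refine ⟨w, hM.1 z hzM (q d) (hNM hdN) hzd L hL hzL hdL hwL,
        fun h => hzN (hN w h (q d) hdN hwd L hL hwL hdL hzL), hw, fun e he => ?_⟩
      have hde : Col Pol.lines (q (σ e)) (q d) :=
        (hσ (σ e) d).2 (by rw [hσ.involutive]; rintro rfl; exact hd he)
      exact mem_perp_singleton.1 (Pol.isSubspace_perp _ z (mem_perp_singleton.2 (hz e he)) (q d)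
        (mem_perp_singleton.2 hde) hzd L hL hzL hdL hwL)
    · exact absurd (hall z hzL) hcol

end Opposition

section Base

variable {q : Fin (2 * n) → P} {σ : Fin (2 * n) → Fin (2 * n)} (hσ : IsOpposition Pol.lines q σ)
include hσ

theorem hasDim_span (hn : n ≠ 0) {A : Finset (Fin (2 * n))} (hA : PairFree σ A)
    (hA0 : A.Nonempty) : HasDim Pol.lines (span Pol.lines (q '' A)) (A.card - 1) := by
  classical
  set S := span Pol.lines (q '' A)
  obtain ⟨L, hAL, hL, hLcard⟩ := exists_pairFree_superset hσ.involutive hσ.apply_ne hA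
  obtain ⟨M, hLM, hM⟩ := Pol.exists_isSingular_superset (K := q '' L) <| by
    rintro _ ⟨a, ha, rfl⟩ _ ⟨b, hb, rfl⟩
    exact hL.col hσ ha hb
  have hSM : S ⊆ M := span_subset hM.1 ((image_mono (by exact_mod_cast hAL)).trans hLM)
  obtain ⟨F, -, hFcard, hFchain, hF⟩ := Pol.exists_chain_spans hσ ∅ A (by simp)
  simp only [span_empty, empty_union, empty_ssubset] at hF
  obtain ⟨C, hFC, hC, hCmax⟩ := exists_maximal_flagIn (S := S)
    ⟨hM.isFlag hFchain fun T hT => ⟨(hF T hT).1, (hF T hT).2.1, (hF T hT).2.2.trans hSM⟩,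
      fun T hT => (hF T hT).2.2⟩
  -- A chain of `n - |A|` spans strictly above `S` bounds the length of any flag inside `S`.
  obtain ⟨G, hGfin, hGcard, hGchain, hG⟩ := Pol.exists_chain_spans hσ (q '' A) (L \ A)
    fun c hc => subset_span.trans <| Pol.span_image_subset_perp hσ <| by
      simpa [hσ.involutive c] using (Finset.mem_sdiff.1 hc).2
  have hAL' : q '' A ∪ q '' ↑(L \ A) ⊆ M := union_subset
    ((image_mono (by exact_mod_cast hAL)).trans hLM)
    ((image_mono (by exact_mod_cast Finset.sdiff_subset)).trans hLM)
  obtain ⟨hCfin, hle⟩ := Pol.ncard_add_ncard_le_of_isChain hn hM hSM hC.1.1 hGchain hGfin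
    (fun T hT => ⟨(hC.1.2 T hT).1.1, (hC.1.2 T hT).2, hC.2 T hT⟩)
    fun T hT => ⟨(hG T hT).1, (hG T hT).2.1, (hG T hT).2.2.trans (span_subset hM.1 hAL')⟩
  rw [hGcard, Finset.card_sdiff_of_subset hAL, hLcard] at hle
  have := ncard_le_ncard hFC hCfin
  have := Finset.card_le_card hAL
  have := hA0.card_pos
  refine ⟨⟨isSubspace_span _, fun a ha b hb => hM.2 a (hSM ha) b (hSM hb)⟩, C, hC, hCmax, hCfin, ?_⟩
  omega

theorem mem_span_of_forall_col (hn : n ≠ 0) {K : Finset (Fin (2 * n))} (hK : PairFree σ K)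
    {x : P} (hx : ∀ m, σ m ∉ K → Col Pol.lines (q m) x) : x ∈ span Pol.lines (q '' K) := by
  classical
  by_contra hxK
  obtain ⟨L, hKL, hL, hLcard⟩ := exists_pairFree_superset hσ.involutive hσ.apply_ne hK
  have hxL : ∀ a ∈ L, Col Pol.lines (q a) x := fun a ha => hx a fun h => hL a ha (hKL h)
  obtain ⟨M, hLM, hM⟩ := Pol.exists_isSingular_superset (K := insert x (q '' L)) <| by
    rintro _ (rfl | ⟨a, ha, rfl⟩) _ (rfl | ⟨b, hb, rfl⟩)
    exacts [col_refl _, (hxL b hb).symm, hxL a ha, hL.col hσ ha hb]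
  have hKM : q '' K ⊆ M :=
    (image_mono (by exact_mod_cast hKL)).trans ((subset_insert _ _).trans hLM)
  set X := insert x (q '' K)
  -- The `|K|` spans inside `span K`, then `span X`, then `n - |K|` spans above it would form a
  -- flag of length `n + 1`.
  obtain ⟨F, -, hFcard, hFchain, hF⟩ := Pol.exists_chain_spans hσ ∅ K (by simp)
  simp only [span_empty, empty_union, empty_ssubset] at hF
  obtain ⟨G, hGfin, hGcard, hGchain, hG⟩ := Pol.exists_chain_spans hσ X (L \ K) fun c hc => by
    have hc' : σ (σ c) ∉ (K : Set (Fin (2 * n))) := by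
      simpa [hσ.involutive c] using (Finset.mem_sdiff.1 hc).2
    exact insert_subset (mem_perp_singleton.2 (hx _ hc'))
      (subset_span.trans (Pol.span_image_subset_perp hσ hc'))
  have hXL : X ∪ q '' ↑(L \ K) ⊆ M := union_subset (insert_subset (hLM (mem_insert x _)) hKM)
    ((image_mono (by exact_mod_cast Finset.sdiff_subset)).trans ((subset_insert _ _).trans hLM))
  have hKX : span Pol.lines (q '' K) ⊂ span Pol.lines X :=
    (ssubset_iff_of_subset (span_mono (subset_insert _ _))).2 ⟨x, subset_span (mem_insert x _), hxK⟩
  have hXG : span Pol.lines X ∉ G := fun h => (hG _ h).2.1.ne rfl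
  obtain ⟨-, hle⟩ := Pol.ncard_add_ncard_le_of_isChain hn hM (span_subset hM.1 hKM) hFchain
    (hGchain.insert fun U hU _ => Or.inl (hG U hU).2.1.subset) (hGfin.insert _) hF <| by
    rintro T (rfl | hT)
    · exact ⟨isSubspace_span _, hKX, span_subset hM.1 (subset_union_left.trans hXL)⟩
    · exact ⟨(hG T hT).1, hKX.trans (hG T hT).2.1, (hG T hT).2.2.trans (span_subset hM.1 hXL)⟩
  rw [ncard_insert_of_notMem hXG hGfin, hFcard, hGcard, Finset.card_sdiff_of_subset hKL,
    hLcard] at hle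
  have := Finset.card_le_card hKL
  omega

theorem eq_of_forall_col (hn : n ≠ 0) (a : Fin (2 * n)) {x : P}
    (hx : ∀ m, m ≠ σ a → Col Pol.lines (q m) x) : x = q a := by
  have := Pol.mem_span_of_forall_col hσ hn (pairFree_singleton (hσ.apply_ne a)) fun m hm =>
    hx m fun h => hm (by simp [h, hσ.involutive a])
  simpa [span_singleton] using this

theorem span_inter_span (hn : n ≠ 0) {I J : Finset (Fin (2 * n))} (hI : PairFree σ I) :
    span Pol.lines (q '' I) ∩ span Pol.lines (q '' J) = span Pol.lines (q '' ↑(I ∩ J)) := by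
  classical
  refine subset_antisymm (fun x ⟨hxI, hxJ⟩ => ?_) (subset_inter
    (span_mono (image_mono (by simp))) (span_mono (image_mono (by simp))))
  refine Pol.mem_span_of_forall_col hσ hn (hI.mono Finset.inter_subset_left) fun m hm => ?_
  rw [Finset.mem_inter, not_and_or] at hm
  rcases hm with hm | hm
  · exact mem_perp_singleton.1 (Pol.span_image_subset_perp hσ (by exact_mod_cast hm) hxI)
  · exact mem_perp_singleton.1 (Pol.span_image_subset_perp hσ (by exact_mod_cast hm) hxJ)

theorem span_mem_baseSubset (hn : n ≠ 0) {k : ℕ} {A : Finset (Fin (2 * n))} (hA : PairFree σ A)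
    (hcard : A.card = k + 1) : span Pol.lines (q '' A) ∈ baseSubset Pol.lines q k :=
  ⟨by simpa [hcard] using Pol.hasDim_span hσ hn hA (Finset.card_pos.1 (by omega)), A, rfl⟩

theorem col_or_col_of_mem_baseSubset {k : ℤ} {S : Set P} (hS : S ∈ baseSubset Pol.lines q k)
    {x : P} (hx : x ∈ S) (a : Fin (2 * n)) :
    Col Pol.lines (q a) x ∨ Col Pol.lines (q (σ a)) x := by
  obtain ⟨hdim, I, rfl⟩ := hS
  by_cases ha : a ∈ I
  · exact Or.inl (hdim.1.2 _ (subset_span ⟨a, ha, rfl⟩) x hx)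
  · exact Or.inr (mem_perp_singleton.1
      (Pol.span_image_subset_perp hσ (by rwa [hσ.involutive]) hx))

theorem exists_hasDim_superset_notMem (hn : 3 ≤ n) (hC : TypeC Pol.lines n)
    {K : Finset (Fin (2 * n))} (hK : PairFree σ K) (hKcard : K.card = n) {i : Fin (2 * n)}
    (hi : i ∈ K) : ∃ M, HasDim Pol.lines M (n - 1) ∧ span Pol.lines (q '' ↑(K.erase i)) ⊆ M ∧
      q i ∉ M ∧ q (σ i) ∉ M := by
  classical
  have hn0 : n ≠ 0 := by omega
  set D := K.erase i
  have hD : PairFree σ D := hK.mono (K.erase_subset i)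
  have hDcard : D.card = n - 1 := by rw [Finset.card_erase_of_mem hi, hKcard]
  have hiD : i ∉ D := K.notMem_erase i
  have hσiD : σ i ∉ D := fun h => hK i hi (Finset.mem_of_mem_erase h)
  have hN : HasDim Pol.lines (span Pol.lines (q '' D)) (n - 2) := by
    have := Pol.hasDim_span hσ hn0 hD (Finset.card_pos.1 (by omega))
    rwa [hDcard, Nat.cast_sub (by omega), Nat.cast_one, sub_sub, one_add_one_eq_two] at this
  have hU : ∀ a, a ∉ D → σ a ∉ D →
      HasDim Pol.lines (span Pol.lines (q '' ↑(insert a D))) (n - 1) := by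
    intro a ha hσa
    have := Pol.hasDim_span hσ hn0 (pairFree_insert hσ.involutive hD (hσ.apply_ne a) hσa)
      (Finset.insert_nonempty a D)
    rwa [Finset.card_insert_of_notMem ha, hDcard, Nat.sub_add_cancel (by omega)] at this
  obtain ⟨M, hM, hDM, hMi, hMσi⟩ : ∃ M, HasDim Pol.lines M (n - 1) ∧
      span Pol.lines (q '' D) ⊆ M ∧ M ≠ span Pol.lines (q '' ↑(insert i D)) ∧
      M ≠ span Pol.lines (q '' ↑(insert (σ i) D)) := by
    obtain ⟨M₁, h₁, M₂, h₂, M₃, h₃, h₁₂, h₁₃, h₂₃, hD₁, hD₂, hD₃⟩ := hC _ hN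
    by_contra! h
    have e₁ := or_iff_not_imp_left.2 (h M₁ h₁ hD₁)
    have e₂ := or_iff_not_imp_left.2 (h M₂ h₂ hD₂)
    have e₃ := or_iff_not_imp_left.2 (h M₃ h₃ hD₃)
    clear * - e₁ e₂ e₃ h₁₂ h₁₃ h₂₃
    grind
  -- If `q a ∈ M` then `span (q '' insert a D) ⊆ M`, and both subspaces are maximal.
  have hnotMem : ∀ a, a ∉ D → σ a ∉ D → M ≠ span Pol.lines (q '' ↑(insert a D)) → q a ∉ M :=
    fun a ha hσa hne hqa => hne <| (Pol.eq_of_hasDim_of_subset hn0 (hU a ha hσa) hM.1 <|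
      span_subset hM.1.1 <| by
        rw [Finset.coe_insert, image_insert_eq]
        exact insert_subset hqa (subset_span.trans hDM)).symm
  refine ⟨M, hM, hDM, hnotMem i hiD hσiD hMi, hnotMem (σ i) hσiD ?_ hMσi⟩
  rwa [hσ.involutive]

theorem exists_col_iff_of_hasDim (hn : n ≠ 0) {K : Finset (Fin (2 * n))} (hK : PairFree σ K)
    (hKcard : K.card = n) {i : Fin (2 * n)} (hi : i ∈ K) {M : Set P}
    (hM : HasDim Pol.lines M (n - 1)) (hKM : span Pol.lines (q '' ↑(K.erase i)) ⊆ M)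
    (hiM : q i ∉ M) (hσiM : q (σ i) ∉ M) :
    ∃ x, ∀ l, Col Pol.lines (q l) x ↔ l ≠ i ∧ l ≠ σ i := by
  classical
  set N := span Pol.lines (q '' ↑(K.erase i))
  obtain ⟨z₀, hz₀M, hz₀N⟩ : ∃ z ∈ M, z ∉ N := by
    by_contra! hMN
    have hMK := Pol.eq_of_hasDim_of_subset hn hM (Pol.hasDim_span hσ hn hK ⟨i, hi⟩).1
      (subset_trans hMN (span_mono (image_mono (by simp))))
    exact hiM (hMK ▸ subset_span ⟨i, hi, rfl⟩)
  obtain ⟨x, hxM, -, hx⟩ := Pol.exists_mem_diff_forall_col hσ hM.1 (isSubspace_span _) hKM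
    hz₀M hz₀N (K.erase i) fun d hd => subset_span ⟨d, hd, rfl⟩
  have hcol : ∀ l, l ≠ i → l ≠ σ i → Col Pol.lines (q l) x := by
    intro l hli hlσi
    rcases hK.mem_or_apply_mem hσ.involutive hKcard l with h | h
    · exact hM.1.2 _ (hKM (subset_span ⟨l, Finset.mem_erase.2 ⟨hli, h⟩, rfl⟩)) x hxM
    · refine hσ.involutive l ▸ hx (σ l) (Finset.mem_erase.2 ⟨fun h' => hlσi ?_, h⟩)
      rw [← h', hσ.involutive]
  refine ⟨x, fun l => ⟨fun hl => ⟨?_, ?_⟩, fun hl => hcol l hl.1 hl.2⟩⟩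
  · rintro rfl
    refine hiM (Pol.eq_of_forall_col hσ hn l (fun m hm => ?_) ▸ hxM)
    by_cases hml : m = l
    exacts [hml ▸ hl, hcol m hml hm]
  · rintro rfl
    refine hσiM (Pol.eq_of_forall_col hσ hn (σ i) (fun m hm => ?_) ▸ hxM)
    rw [hσ.involutive] at hm
    by_cases hml : m = σ i
    exacts [hml ▸ hl, hcol m hm hml]

theorem exists_col_iff_of_typeC (hn : 3 ≤ n) (hC : TypeC Pol.lines n) (i : Fin (2 * n)) :
    ∃ x, ∀ l, Col Pol.lines (q l) x ↔ l ≠ i ∧ l ≠ σ i := by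
  obtain ⟨K, hiK, hK, hKcard⟩ := exists_pairFree_superset hσ.involutive hσ.apply_ne
    (pairFree_singleton (hσ.apply_ne i))
  have hi := hiK (Finset.mem_singleton_self i)
  obtain ⟨M, hM, hKM, hiM, hσiM⟩ := Pol.exists_hasDim_superset_notMem hσ hn hC hK hKcard hi
  exact Pol.exists_col_iff_of_hasDim hσ (by omega) hK hKcard hi hM hKM hiM hσiM

end Base

section Exact

variable {p : Fin (2 * n) → P} {σ : Fin (2 * n) → Fin (2 * n)} (hσ : IsOpposition Pol.lines p σ)
include hσ

theorem baseSubset_update_ne (hn : n ≠ 0) {i : Fin (2 * n)} {x : P}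
    (hx : ∀ l, Col Pol.lines (p l) x ↔ l ≠ i ∧ l ≠ σ i) {k : ℕ} (hk : k + 1 ≤ n) :
    baseSubset Pol.lines (Function.update p i x) k ≠ baseSubset Pol.lines p k := by
  obtain ⟨K, hiK, hK, hKcard⟩ := exists_pairFree_superset_card_eq hσ.involutive hσ.apply_ne
    (pairFree_singleton (hσ.apply_ne i)) (by simp) hk
  intro h
  have hS := h ▸ Pol.span_mem_baseSubset (hσ.update hx) hn hK hKcard
  have hxS : x ∈ span Pol.lines (Function.update p i x '' K) :=
    subset_span ⟨i, hiK (Finset.mem_singleton_self i), by simp⟩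
  rcases Pol.col_or_col_of_mem_baseSubset hσ hS hxS i with h | h
  exacts [((hx i).1 h).1 rfl, ((hx (σ i)).1 h).2 rfl]

theorem mem_range_of_minus_subset (hn : n ≠ 0) {q : Fin (2 * n) → P} (hq : IsBase Pol.lines q)
    {k : ℕ} (hk : k + 2 ≤ n) {i : Fin (2 * n)}
    (hminus : minus (baseSubset Pol.lines p k) (p i) ⊆ baseSubset Pol.lines q k)
    {l : Fin (2 * n)} (hli : l ≠ i) : p l ∈ range q := by
  obtain ⟨τ, hτ⟩ := hq.exists_isOpposition
  obtain ⟨I, J, hI, hJ, hIcard, hJcard, hiI, hiJ, hIJ⟩ :=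
    exists_pairFree_inter_eq_singleton hσ.involutive hσ.apply_ne hk hli
  have hmem : ∀ A, PairFree σ A → A.card = k + 1 → i ∉ A → ∃ A' : Finset (Fin (2 * n)),
      PairFree τ A' ∧ span Pol.lines (p '' A) = span Pol.lines (q '' A') :=
    fun A hA hAcard hiA => exists_pairFree_of_mem_baseSubset hτ <| hminus
      ⟨Pol.span_mem_baseSubset hσ hn hA hAcard,
        Pol.apply_notMem_span_image hσ (by exact_mod_cast hiA)⟩
  obtain ⟨I', hI', hII'⟩ := hmem I hI hIcard hiI
  obtain ⟨J', -, hJJ'⟩ := hmem J hJ hJcard hiJ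
  -- `{p l} = span I ∩ span J` is also spanned by the points of `q` indexed by `I' ∩ J'`.
  have h := Pol.span_inter_span hσ hn (J := J) hI
  rw [hIJ, hII', hJJ', Pol.span_inter_span hτ hn hI', Finset.coe_singleton, image_singleton,
    span_singleton] at h
  obtain ⟨j, hj⟩ : (I' ∩ J').Nonempty := by
    by_contra! hempty
    simp [hempty, span_empty] at h
  have hqj : q j ∈ span Pol.lines (q '' ↑(I' ∩ J')) := subset_span ⟨j, hj, rfl⟩
  rw [h] at hqj
  exact ⟨j, hqj⟩

theorem mem_of_range_subset_insert {q : Fin (2 * n) → P} {k : ℤ} {S : Set P}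
    (hS : S ∈ baseSubset Pol.lines q k) {i : Fin (2 * n)} (hiS : p i ∈ S) {y : P}
    (hq : range q ⊆ insert y (p '' {i}ᶜ)) : y ∈ S := by
  obtain ⟨-, J, rfl⟩ := hS
  by_contra hy
  refine Pol.apply_notMem_span_image hσ (I := {i}ᶜ) (by simp) (span_mono ?_ hiS)
  rintro _ ⟨j, hj, rfl⟩
  exact (hq (mem_range_self j)).resolve_left fun h => hy (h ▸ subset_span ⟨j, hj, rfl⟩)

theorem baseSubset_eq_of_minus_subset (hn : n ≠ 0) {q : Fin (2 * n) → P}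
    (hq : IsBase Pol.lines q) {k : ℕ} (hk : k + 2 ≤ n) {i : Fin (2 * n)}
    (hminus : minus (baseSubset Pol.lines p k) (p i) ⊆ baseSubset Pol.lines q k) {S : Set P}
    (hS : S ∈ baseSubset Pol.lines q k) (hiS : p i ∈ S) :
    baseSubset Pol.lines q k = baseSubset Pol.lines p k := by
  obtain ⟨τ, hτ⟩ := hq.exists_isOpposition
  have hsub : p '' {i}ᶜ ⊆ range q := by
    rintro _ ⟨l, hl, rfl⟩
    exact Pol.mem_range_of_minus_subset hσ hn hq hk hminus hl
  -- The point of `q` opposite to `p (σ i)` is the only one that is not a `p l` with `l ≠ i`.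
  obtain ⟨m, hm⟩ := hsub ⟨σ i, hσ.apply_ne i, rfl⟩
  have hy : q (τ m) ∉ p '' {i}ᶜ := by
    rintro ⟨l, hli, hl⟩
    refine hτ.not_col m ?_
    rw [hm, ← hl]
    exact (hσ _ l).2 fun h => hli (by rw [h, hσ.involutive]; exact mem_singleton i)
  have hrange := range_eq_insert_of_image_compl_subset hσ.injective hτ.injective hsub
    (mem_range_self _) hy
  have hyS := Pol.mem_of_range_subset_insert hσ hS hiS hrange.le
  have hyi : q (τ m) = p i := by
    refine Pol.eq_of_forall_col hσ hn i fun l hl => ?_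
    by_cases hli : l = i
    · exact hli ▸ hS.1.1.2 _ hiS _ hyS
    · obtain ⟨j, hj⟩ := hsub ⟨l, hli, rfl⟩
      rw [← hj]
      refine (hτ j _).2 fun h => hl (hσ.injective ?_)
      rw [← hj, ← hm, hτ.involutive.injective h]
  refine baseSubset_eq_of_range_eq ?_ k
  rw [hrange, hyi, ← image_insert_eq, insert_eq, union_compl_self, image_univ]

end Exact

end PolarSpace

end PolarGeo

open PolarGeo
/-- Proposition 3 (type C, `k ≤ n-2`): `𝓑(-i)` is a maximal inexact subset. -/
theorem minus_maximal_inexact_typeC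
    {P : Type*} {n : ℕ} (Pol : PolarSpace P n) (hn : 3 ≤ n)
    (hC : TypeC Pol.lines n) (k : ℕ) (hk : k ≤ n - 2)
    (p : Fin (2 * n) → P) (hp : IsBase Pol.lines p) (i : Fin (2 * n)) :
    IsMaxInexact Pol.lines n (k : ℤ) (baseSubset Pol.lines p (k : ℤ))
      (minus (baseSubset Pol.lines p (k : ℤ)) (p i)) := by
  obtain ⟨σ, hσ⟩ := hp.exists_isOpposition
  obtain ⟨x, hx⟩ := Pol.exists_col_iff_of_typeC hσ hn hC i
  refine ⟨⟨fun S hS => hS.1, Function.update p i x, (hσ.update hx).isBase,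
    minus_subset_baseSubset_update i x, Pol.baseSubset_update_ne hσ (by omega) hx (by omega)⟩, ?_⟩
  rintro R ⟨hRB, q, hq, hRq, hne⟩ hsub
  refine hsub.antisymm fun S hS => ⟨hRB hS, fun hiS => hne ?_⟩
  exact Pol.baseSubset_eq_of_minus_subset hσ (by omega) hq (by omega) (hsub.trans hRq) (hRq hS) hiS
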